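/- arXiv:1910.12355 — 2 statements merged into one kernel-verified Lean document; each statement's English description precedes it below -/
import Mathlib

section
/- Let G be a finite distance-regular graph with intersection numbers {(a_k, b_k)} and diameter n, and let P_0, …, P_n be the polynomials of the first kind built from a_1,…,a_n, b_1,…,b_n and α_k = b_1 − (a_k + b_{k+1}) (with b_{n+1} = 0). Then for every 0 ≤ k ≤ n, evaluating P_k at the adjacency matrix A gives the normalized distance-k matrix: P_k(A) = (∏_{m=1}^{k} √(a_m/b_m)) · A_k. -/
/-!
Counting the neighbours of `v` at distance `k`, `k + 1`, `k + 2` from `u` gives the three-term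
recurrence `A * A_(k+1) = a_(k+2) A_(k+2) + α_(k+1) A_(k+1) + b_(k+1) A_k`, with `A * A_0 = a_1 A_1`
since `a_1 = 1`. Rescaling `A_k` by `c_k = ∏_{m ≤ k} √(a_m / b_m)` turns the coefficients `a_(k+2)`
and `b_(k+1)` into `√(a_(k+2) b_(k+2))` and `√(a_(k+1) b_(k+1))`, which is exactly the recurrence
defining the polynomials of the first kind. The recurrence holds for every `k`: past the
diameter both `A_k` and `b_k` vanish.
-/

/-- A connected, locally finite simple graph `G` is *distance-regular* with intersection
numbers `a k`, `b k` (for `1 ≤ k` up to the diameter). -/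
def IsDistRegular {V : Type*} (G : SimpleGraph V) (a b : ℕ → ℕ) : Prop :=
  (∀ k : ℕ, 1 ≤ k → (∃ u v : V, G.dist u v = k) → 0 < a k ∧ 0 < b k) ∧
  (∀ k : ℕ, 1 ≤ k → ¬ (∃ u v : V, G.dist u v = k) → b k = 0) ∧
  (∀ (k : ℕ) (u v : V), G.dist u v = k →
    (1 ≤ k → {w : V | G.Adj v w ∧ G.dist u w = k - 1}.ncard = a k) ∧
    ((∃ x y : V, G.dist x y = k + 1) →
      {w : V | G.Adj v w ∧ G.dist u w = k + 1}.ncard = b (k + 1)))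

/-- The distance-`j` matrix of a graph `G`, with `(u,v)` entry `1` if `dist u v = j` and `0`
otherwise. -/
noncomputable def distMatrix {V : Type*} (G : SimpleGraph V) (j : ℤ) : Matrix V V ℝ :=
  Matrix.of fun u v => if (G.dist u v : ℤ) = j then 1 else 0

/-- The polynomials of the first kind: `P 0 = 1`, `P 1 = X / √(a 1 * b 1)`, and
`√(a (k+1) * b (k+1)) * P (k+1) = (X - α k) * P k - √(a k * b k) * P (k-1)`. -/
noncomputable def firstKind (a b α : ℕ → ℝ) : ℕ → Polynomial ℝ
  | 0 => 1
  | 1 => Polynomial.C (Real.sqrt (a 1 * b 1))⁻¹ * Polynomial.X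
  | k + 2 =>
      Polynomial.C (Real.sqrt (a (k + 2) * b (k + 2)))⁻¹ *
        ((Polynomial.X - Polynomial.C (α (k + 1))) * firstKind a b α (k + 1) -
          Polynomial.C (Real.sqrt (a (k + 1) * b (k + 1))) * firstKind a b α k)

open Finset Polynomial

lemma Real.sqrt_div_mul_eq_sqrt_mul (x : ℝ) {y : ℝ} (hy : 0 ≤ y) :
    √(x / y) * y = √(x * y) := by
  rcases hy.eq_or_lt with rfl | hy
  · simp
  rw [← Real.sqrt_sq hy.le, ← Real.sqrt_mul' _ (by positivity), Real.sqrt_sq hy.le]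
  congr 1
  field_simp

lemma Real.inv_sqrt_mul_mul_eq_sqrt_div {x y : ℝ} (hx : 0 ≤ x) (hy : 0 ≤ y) :
    (√(x * y))⁻¹ * x = √(x / y) := by
  rw [Real.sqrt_mul hx, Real.sqrt_div' x hy, ← div_eq_inv_mul, ← div_div, Real.div_sqrt]

-- No positivity is needed: where `a` or `b` vanishes, `(√(a * b))⁻¹` and `√(a / b)` are both `0`.
theorem aeval_firstKind_eq_prod_smul {R : Type*} [Ring R] [Algebra ℝ R] {a b α : ℕ → ℝ}
    (ha : ∀ k, 0 ≤ a k) (hb : ∀ k, 0 ≤ b k) {x : R} {M : ℕ → R} (h0 : M 0 = 1)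
    (h1 : a 1 • M 1 = x)
    (hrec : ∀ k, x * M (k + 1) = a (k + 2) • M (k + 2) + α (k + 1) • M (k + 1) + b (k + 1) • M k)
    (k : ℕ) : aeval x (firstKind a b α k) = (∏ m ∈ Icc 1 k, √(a m / b m)) • M k := by
  induction k using Nat.twoStepInduction with
  | zero => simp [firstKind, h0]
  | one =>
    rw [firstKind, map_mul, aeval_C, aeval_X, ← h1, ← Algebra.smul_def, smul_smul,
      Real.inv_sqrt_mul_mul_eq_sqrt_div (ha 1) (hb 1), Icc_self, prod_singleton]
  | more k ih₀ ih₁ =>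
    have hr : (∏ m ∈ Icc 1 (k + 1), √(a m / b m)) * b (k + 1) =
        (∏ m ∈ Icc 1 k, √(a m / b m)) * √(a (k + 1) * b (k + 1)) := by
      rw [prod_Icc_succ_top (by omega), mul_assoc, Real.sqrt_div_mul_eq_sqrt_mul _ (hb _)]
    have hs : (√(a (k + 2) * b (k + 2)))⁻¹ * (∏ m ∈ Icc 1 (k + 1), √(a m / b m)) * a (k + 2) =
        ∏ m ∈ Icc 1 (k + 2), √(a m / b m) := by
      rw [prod_Icc_succ_top (by omega : 1 ≤ k + 2), mul_right_comm,
        Real.inv_sqrt_mul_mul_eq_sqrt_div (ha _) (hb _), mul_comm]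
    simp only [firstKind, map_mul, map_sub, aeval_C, aeval_X, Algebra.algebraMap_eq_smul_one,
      ih₀, ih₁, sub_mul, smul_mul_assoc, mul_smul_comm, one_mul, hrec]
    match_scalars
    · linear_combination hs
    · ring
    · linear_combination (√(a (k + 2) * b (k + 2)))⁻¹ * hr

namespace SimpleGraph

variable {V : Type*} {G : SimpleGraph V}

lemma distMatrix_natCast_apply (m : ℕ) (u v : V) :
    distMatrix G m u v = if G.dist u v = m then 1 else 0 := by
  simp [distMatrix]

lemma distMatrix_one_apply [DecidableRel G.Adj] (u v : V) :
    distMatrix G 1 u v = if G.Adj u v then 1 else 0 := by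
  simp [distMatrix]

lemma setOf_adj_dist_eq_empty {m : ℕ} {u v : V} (h : G.dist u v + 1 < m ∨ m + 1 < G.dist u v) :
    {w | G.Adj v w ∧ G.dist u w = m} = ∅ :=
  Set.eq_empty_of_forall_notMem fun w ⟨hvw, hw⟩ => by
    rcases hvw.diff_dist_adj (u := u) with h' | h' | h' <;> omega

lemma Connected.distMatrix_zero [DecidableEq V] (hconn : G.Connected) : distMatrix G 0 = 1 := by
  ext u v
  simp [distMatrix, Matrix.one_apply, hconn.dist_eq_zero_iff]

lemma distMatrix_one_mul_apply [Fintype V] (m : ℕ) (u v : V) :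
    (distMatrix G 1 * distMatrix G m) v u = {w | G.Adj v w ∧ G.dist u w = m}.ncard := by
  classical
  have hterm (w : V) : distMatrix G 1 v w * distMatrix G m w u =
      if G.Adj v w ∧ G.dist u w = m then 1 else 0 := by
    simp only [distMatrix_one_apply, distMatrix_natCast_apply, dist_comm (u := w),
      ite_zero_mul_ite_zero, mul_one]
  rw [Matrix.mul_apply, Finset.sum_congr rfl fun w _ => hterm w, Finset.sum_boole,
    Set.ncard_eq_toFinset_card', Set.toFinset_ofPred]

end SimpleGraph

namespace IsDistRegular

open SimpleGraph

variable {V : Type*} {G : SimpleGraph V} {a b : ℕ → ℕ}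

lemma ncard_adj_dist_pred (hdr : IsDistRegular G a b) {k : ℕ} {u v : V}
    (h : G.dist u v = k + 1) : {w | G.Adj v w ∧ G.dist u w = k}.ncard = a (k + 1) :=
  (hdr.2.2 _ u v h).1 (by omega)

lemma ncard_adj_dist_succ (hdr : IsDistRegular G a b) {k : ℕ} {u v : V} (h : G.dist u v = k) :
    {w | G.Adj v w ∧ G.dist u w = k + 1}.ncard = b (k + 1) := by
  by_cases hk : ∃ x y : V, G.dist x y = k + 1
  · exact (hdr.2.2 k u v h).2 hk
  · have hempty : {w | G.Adj v w ∧ G.dist u w = k + 1} = ∅ :=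
      Set.eq_empty_of_forall_notMem fun w hw => hk ⟨u, w, hw.2⟩
    rw [hempty, Set.ncard_empty, hdr.2.1 _ (by omega) hk]

lemma ncard_adj (hdr : IsDistRegular G a b) (v : V) : {w | G.Adj v w}.ncard = b 1 := by
  simpa using hdr.ncard_adj_dist_succ (dist_self (v := v))

lemma ncard_adj_dist_self [G.LocallyFinite] (hdr : IsDistRegular G a b) {k : ℕ} {u v : V}
    (h : G.dist u v = k + 1) :
    a (k + 1) + {w | G.Adj v w ∧ G.dist u w = k + 1}.ncard + b (k + 2) = b 1 := by
  have hsplit : {w | G.Adj v w} = {w | G.Adj v w ∧ G.dist u w = k} ∪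
      ({w | G.Adj v w ∧ G.dist u w = k + 1} ∪ {w | G.Adj v w ∧ G.dist u w = k + 2}) := by
    ext w
    simp only [Set.mem_ofPred_eq, Set.mem_union]
    constructor
    · intro hvw
      simp only [hvw, true_and]
      rcases hvw.diff_dist_adj (u := u) with h' | h' | h' <;> omega
    · rintro (⟨hvw, -⟩ | ⟨hvw, -⟩ | ⟨hvw, -⟩) <;> exact hvw
  have hdisj₁ : Disjoint {w | G.Adj v w ∧ G.dist u w = k}
      ({w | G.Adj v w ∧ G.dist u w = k + 1} ∪ {w | G.Adj v w ∧ G.dist u w = k + 2}) := by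
    rw [Set.disjoint_left]
    rintro w ⟨-, hw⟩ (⟨-, hw'⟩ | ⟨-, hw'⟩) <;> omega
  have hdisj₂ : Disjoint {w | G.Adj v w ∧ G.dist u w = k + 1}
      {w | G.Adj v w ∧ G.dist u w = k + 2} := by
    rw [Set.disjoint_left]
    rintro w ⟨-, hw⟩ ⟨-, hw'⟩
    omega
  have hfin (m : ℕ) : {w | G.Adj v w ∧ G.dist u w = m}.Finite :=
    (G.neighborSet v).toFinite.subset fun w hw => hw.1
  rw [← hdr.ncard_adj v, hsplit, Set.ncard_union_eq hdisj₁ (hfin _) ((hfin _).union (hfin _)),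
    Set.ncard_union_eq hdisj₂ (hfin _) (hfin _), hdr.ncard_adj_dist_pred h,
    hdr.ncard_adj_dist_succ h]
  exact add_assoc _ _ _

lemma a_one_of_adj (hdr : IsDistRegular G a b) {u v : V} (huv : G.Adj u v) : a 1 = 1 := by
  have hsingleton : {w | G.Adj v w ∧ G.dist u w = 0} = {u} := by
    ext w
    simp only [Set.mem_ofPred_eq, Set.mem_singleton_iff, dist_eq_zero_iff_eq_or_not_reachable]
    constructor
    · rintro ⟨hvw, rfl | hnr⟩
      · rfl
      · exact absurd (huv.reachable.trans hvw.reachable) hnr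
    · rintro rfl
      exact ⟨huv.symm, Or.inl rfl⟩
  rw [← hdr.ncard_adj_dist_pred (dist_eq_one_iff_adj.2 huv), hsingleton, Set.ncard_singleton]

lemma a_one_smul_distMatrix_one (hdr : IsDistRegular G a b) :
    (a 1 : ℝ) • distMatrix G 1 = distMatrix G 1 := by
  classical
  ext u v
  rw [Matrix.smul_apply, distMatrix_one_apply]
  split_ifs with huv
  · simp [hdr.a_one_of_adj huv]
  · simp

lemma distMatrix_one_mul_distMatrix_succ [Fintype V] (hdr : IsDistRegular G a b) (k : ℕ) :
    distMatrix G 1 * distMatrix G ↑(k + 1) =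
      (a (k + 2) : ℝ) • distMatrix G ↑(k + 2) +
        ((b 1 : ℝ) - (a (k + 1) + b (k + 2))) • distMatrix G ↑(k + 1) +
        (b (k + 1) : ℝ) • distMatrix G ↑k := by
  classical
  ext v u
  simp only [distMatrix_one_mul_apply, Matrix.add_apply, Matrix.smul_apply,
    distMatrix_natCast_apply, dist_comm (u := v), smul_eq_mul, mul_ite, mul_one, mul_zero]
  obtain h | h | h | h : G.dist u v = k + 2 ∨ G.dist u v = k + 1 ∨ G.dist u v = k ∨
      (G.dist u v + 1 < k + 1 ∨ k + 1 + 1 < G.dist u v) := by omega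
  · simp [h, hdr.ncard_adj_dist_pred h]
  · rw [if_neg (by omega), if_pos h, if_neg (by omega), ← hdr.ncard_adj_dist_self h]
    push_cast
    ring
  · simp [h, hdr.ncard_adj_dist_succ h]
  · simp [setOf_adj_dist_eq_empty h, show G.dist u v ≠ k + 2 by omega,
      show G.dist u v ≠ k + 1 by omega, show G.dist u v ≠ k by omega]

end IsDistRegular

theorem distRegular_firstKind_eval_adjMatrix_general {V : Type*} [Fintype V] [DecidableEq V]
    (G : SimpleGraph V) (hconn : G.Connected) (a b : ℕ → ℕ) (hdr : IsDistRegular G a b)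
    (n : ℕ) :
    ∀ k : ℕ, k ≤ n →
      Polynomial.aeval (distMatrix G 1)
          (firstKind (fun m => (a m : ℝ)) (fun m => (b m : ℝ))
            (fun m => (b 1 : ℝ) - ((a m : ℝ) + (b (m + 1) : ℝ))) k) =
        (∏ m ∈ Finset.Icc 1 k, Real.sqrt ((a m : ℝ) / (b m : ℝ))) • distMatrix G (k : ℤ) := by
  intro k _
  exact aeval_firstKind_eq_prod_smul (fun _ => Nat.cast_nonneg _) (fun _ => Nat.cast_nonneg _)
    (M := fun k => distMatrix G k) hconn.distMatrix_zero hdr.a_one_smul_distMatrix_one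
    hdr.distMatrix_one_mul_distMatrix_succ k

/-- For a finite distance-regular graph of diameter `n` with intersection numbers
`{(a k, b k)}` and adjacency matrix `A = A_1`, evaluating the `k`-th polynomial of the first
kind (built from `a`, `b` and `α k = b 1 - (a k + b (k+1))`, with `b (n+1) = 0`) at `A` gives
the normalized distance-`k` matrix:
`P k (A) = (∏_{m=1}^{k} √(a m / b m)) • A_k`, for every `0 ≤ k ≤ n`. -/
theorem distRegular_firstKind_eval_adjMatrix {V : Type*} [Fintype V] [DecidableEq V]
    (G : SimpleGraph V) (hconn : G.Connected) (a b : ℕ → ℕ) (hdr : IsDistRegular G a b)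
    (n : ℕ) (hdiam_le : ∀ u v : V, G.dist u v ≤ n) (hdiam : ∃ u v : V, G.dist u v = n)
    (hbn : b (n + 1) = 0) :
    ∀ k : ℕ, k ≤ n →
      Polynomial.aeval (distMatrix G 1)
          (firstKind (fun m => (a m : ℝ)) (fun m => (b m : ℝ))
            (fun m => (b 1 : ℝ) - ((a m : ℝ) + (b (m + 1) : ℝ))) k) =
        (∏ m ∈ Finset.Icc 1 k, Real.sqrt ((a m : ℝ) / (b m : ℝ))) • distMatrix G (k : ℤ) :=
  distRegular_firstKind_eval_adjMatrix_general G hconn a b hdr n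
end

section
/- Let P_{n+1}^{(τ)} (τ ∈ ℝ) be the family of perturbed first-kind polynomials associated with positive reals a_1,…,a_n, b_1,…,b_n and reals α_1,…,α_{n−1}. Fix τ₀ ∈ ℝ and let α < β be two roots of P_{n+1}^{(τ₀)} such that P_{n+1}^{(τ₀)} has no root in the open interval (α, β). Then for every τ ≠ τ₀, the polynomial P_{n+1}^{(τ)} has exactly one root in (α, β); that is, the spectra of the Jacobi matrices J_τ are pairwise interlaced. -/
/-- The perturbed polynomial `P_{n+1}^{(τ)}(x) = (x - τ) P n (x) - √(a n * b n) P (n-1) (x)`. -/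
noncomputable def firstKindPerturbed (a b α : ℕ → ℝ) (n : ℕ) (τ : ℝ) : Polynomial ℝ :=
  (Polynomial.X - Polynomial.C τ) * firstKind a b α n -
    Polynomial.C (Real.sqrt (a n * b n)) * firstKind a b α (n - 1)

/-- The `(n+1) × (n+1)` real symmetric tridiagonal Jacobi matrix with diagonal
`(0, α 1, …, α (n-1), τ)` and off-diagonal entries `√(a 1 * b 1), …, √(a n * b n)`. -/
noncomputable def jacobiMat (n : ℕ) (a b α : ℕ → ℝ) (τ : ℝ) :
    Matrix (Fin (n + 1)) (Fin (n + 1)) ℝ :=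
  Matrix.of fun i j =>
    if (i : ℕ) = (j : ℕ) then
      (if (i : ℕ) = 0 then 0 else if (i : ℕ) = n then τ else α (i : ℕ))
    else if (i : ℕ) + 1 = (j : ℕ) then Real.sqrt (a (j : ℕ) * b (j : ℕ))
    else if (j : ℕ) + 1 = (i : ℕ) then Real.sqrt (a (i : ℕ) * b (i : ℕ))
    else 0


/-!
Write `W(p, q) = p q' - p' q`. The three-term recurrence gives the Christoffel–Darboux identity
`W(P_n, P_{n+1}^{(τ)}) = ∑_{j ≤ n} P_j²`, which is positive since `P_0 = 1`. As `τ` enters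
`P_{n+1}^{(τ)}` only through the term `-τ P_n`, this yields
`W(P_{n+1}^{(τ₀)}, P_{n+1}^{(τ)}) = (τ - τ₀) ∑_{j ≤ n} P_j²`, which vanishes nowhere for `τ ≠ τ₀`.
Sturm's separation argument finishes: by Rolle's theorem applied to `P^{(τ)} / P^{(τ₀)}` there are
no two roots of `P^{(τ)}` between consecutive roots of `P^{(τ₀)}`, and applied to
`P^{(τ₀)} / P^{(τ)}` there is at least one.
-/

open Polynomial Set

section Separation

variable {f g f' g' : ℝ → ℝ}

theorem ne_zero_of_wronskian_ne_zero_of_eq_zero (hf : ∀ x, HasDerivAt f (f' x) x)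
    (hg : ∀ x, HasDerivAt g (g' x) x) {u v : ℝ} (huv : u < v)
    (hg0 : ∀ x ∈ Icc u v, g x ≠ 0) (hW : ∀ x ∈ Ioo u v, g x * f' x - g' x * f x ≠ 0)
    (hu : f u = 0) : f v ≠ 0 := by
  intro hv
  have hquot : ∀ x ∈ Icc u v,
      HasDerivAt (fun y => f y / g y) ((f' x * g x - f x * g' x) / g x ^ 2) x :=
    fun x hx => (hf x).div (hg x) (hg0 x hx)
  obtain ⟨c, hc, hc0⟩ := exists_hasDerivAt_eq_zero huv
    (fun x hx => (hquot x hx).continuousAt.continuousWithinAt) (by simp [hu, hv])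
    (fun x hx => hquot x (Ioo_subset_Icc_self hx))
  rw [div_eq_zero_iff, pow_eq_zero_iff two_ne_zero] at hc0
  refine hc0.elim (fun h => hW c hc ?_) (hg0 c (Ioo_subset_Icc_self hc))
  linear_combination h

theorem existsUnique_zero_of_wronskian_ne_zero (hf : ∀ x, HasDerivAt f (f' x) x)
    (hg : ∀ x, HasDerivAt g (g' x) x) {x₁ x₂ : ℝ} (hlt : x₁ < x₂)
    (hW : ∀ x ∈ Icc x₁ x₂, g x * f' x - g' x * f x ≠ 0) (h₁ : g x₁ = 0) (h₂ : g x₂ = 0)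
    (hgap : ∀ x ∈ Ioo x₁ x₂, g x ≠ 0) :
    ∃! x, x ∈ Ioo x₁ x₂ ∧ f x = 0 := by
  have hf_end : ∀ x ∈ Icc x₁ x₂, g x = 0 → f x ≠ 0 := fun x hx hgx hfx =>
    hW x hx (by simp [hgx, hfx])
  obtain ⟨y, hy, hy0⟩ : ∃ y ∈ Ioo x₁ x₂, f y = 0 := by
    by_contra! hno
    have hf0 : ∀ x ∈ Icc x₁ x₂, f x ≠ 0 := by
      intro x hx
      rcases eq_endpoints_or_mem_Ioo_of_mem_Icc hx with rfl | rfl | hx'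
      exacts [hf_end _ hx h₁, hf_end _ hx h₂, hno x hx']
    refine ne_zero_of_wronskian_ne_zero_of_eq_zero hg hf hlt hf0 (fun x hx => ?_) h₁ h₂
    intro h
    exact hW x (Ioo_subset_Icc_self hx) (by linear_combination -h)
  refine ⟨y, ⟨hy, hy0⟩, fun z ⟨hz, hz0⟩ => ?_⟩
  have no_two_zeros : ∀ s ∈ Ioo x₁ x₂, ∀ t ∈ Ioo x₁ x₂, s < t → f s = 0 → f t ≠ 0 :=
    fun s hs t ht hst => ne_zero_of_wronskian_ne_zero_of_eq_zero hf hg hst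
      (fun x hx => hgap x ⟨hs.1.trans_le hx.1, hx.2.trans_lt ht.2⟩)
      (fun x hx => hW x ⟨(hs.1.trans hx.1).le, (hx.2.trans ht.2).le⟩)
  rcases lt_trichotomy z y with h | h | h
  exacts [absurd hy0 (no_two_zeros z hz y hy h hz0), h, absurd hz0 (no_two_zeros y hy z hz h hy0)]

end Separation

theorem Polynomial.wronskian_C_mul_right {R : Type*} [CommRing R] (p q : R[X]) (c : R) :
    wronskian p (C c * q) = C c * wronskian p q := by
  simp only [wronskian, derivative_C_mul]
  ring

theorem Polynomial.wronskian_sub_mul_sub {R : Type*} [CommRing R] (p q : R[X]) (c s : R) :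
    wronskian q ((X - C c) * q - C s * p) = q ^ 2 + C s * wronskian p q := by
  simp only [wronskian, derivative_sub, derivative_mul, derivative_X, derivative_C, zero_mul,
    zero_add, sub_zero, one_mul]
  ring

section FirstKind

variable (a b α : ℕ → ℝ)

theorem C_sqrt_mul_firstKind_add_two {k : ℕ} (hk : 0 < a (k + 2) * b (k + 2)) :
    C √(a (k + 2) * b (k + 2)) * firstKind a b α (k + 2) =
      (X - C (α (k + 1))) * firstKind a b α (k + 1) -
        C √(a (k + 1) * b (k + 1)) * firstKind a b α k := by
  rw [firstKind, ← mul_assoc, ← C_mul, mul_inv_cancel₀ (Real.sqrt_pos.2 hk).ne', C_1, one_mul]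

theorem C_sqrt_mul_wronskian_firstKind {k : ℕ} (h : ∀ j, 1 ≤ j → j ≤ k + 1 → 0 < a j * b j) :
    C √(a (k + 1) * b (k + 1)) * wronskian (firstKind a b α k) (firstKind a b α (k + 1)) =
      ∑ j ∈ Finset.range (k + 1), firstKind a b α j ^ 2 := by
  induction k with
  | zero =>
    simp [firstKind, wronskian, ← C_mul, (Real.sqrt_pos.2 (h 1 le_rfl le_rfl)).ne']
  | succ k ih =>
    rw [← wronskian_C_mul_right, C_sqrt_mul_firstKind_add_two a b α (h _ (by omega) le_rfl),
      wronskian_sub_mul_sub, ih fun j hj hjk => h j hj (by omega),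
      Finset.sum_range_succ _ (k + 1), add_comm]

theorem wronskian_firstKind_firstKindPerturbed {n : ℕ} (τ : ℝ)
    (h : ∀ j, 1 ≤ j → j ≤ n → 0 < a j * b j) :
    wronskian (firstKind a b α n) (firstKindPerturbed a b α n τ) =
      ∑ j ∈ Finset.range (n + 1), firstKind a b α j ^ 2 := by
  rw [firstKindPerturbed, wronskian_sub_mul_sub]
  cases n with
  | zero => simp [wronskian_self_eq_zero, firstKind]
  | succ m =>
    rw [Nat.add_sub_cancel, C_sqrt_mul_wronskian_firstKind a b α h,
      Finset.sum_range_succ _ (m + 1), add_comm]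

theorem wronskian_firstKindPerturbed {n : ℕ} (τ₀ τ : ℝ)
    (h : ∀ j, 1 ≤ j → j ≤ n → 0 < a j * b j) :
    wronskian (firstKindPerturbed a b α n τ₀) (firstKindPerturbed a b α n τ) =
      C (τ - τ₀) * ∑ j ∈ Finset.range (n + 1), firstKind a b α j ^ 2 := by
  have hτ : firstKindPerturbed a b α n τ =
      firstKindPerturbed a b α n τ₀ - C (τ - τ₀) * firstKind a b α n := by
    simp only [firstKindPerturbed, C_sub]
    ring
  rw [hτ, ← wronskian_firstKind_firstKindPerturbed a b α τ₀ h, sub_eq_add_neg,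
    wronskian_add_right, wronskian_neg_right, wronskian_self_eq_zero, wronskian_C_mul_right,
    ← wronskian_neg_eq]
  ring

theorem eval_sum_sq_firstKind_pos (n : ℕ) (x : ℝ) :
    0 < (∑ j ∈ Finset.range (n + 1), firstKind a b α j ^ 2).eval x := by
  rw [eval_finsetSum, Finset.sum_range_succ']
  simp only [eval_pow, firstKind, eval_one, one_pow]
  positivity

end FirstKind

theorem firstKindPerturbed_interlacing_general (n : ℕ) (a b : ℕ → ℝ)
    (hpos : ∀ k : ℕ, 1 ≤ k → k ≤ n → 0 < a k ∧ 0 < b k) (α : ℕ → ℝ) (τ₀ : ℝ)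
    (x₁ x₂ : ℝ) (hlt : x₁ < x₂)
    (h₁ : Polynomial.eval x₁ (firstKindPerturbed a b α n τ₀) = 0)
    (h₂ : Polynomial.eval x₂ (firstKindPerturbed a b α n τ₀) = 0)
    (hgap : ∀ x ∈ Set.Ioo x₁ x₂, Polynomial.eval x (firstKindPerturbed a b α n τ₀) ≠ 0) :
    ∀ τ : ℝ, τ ≠ τ₀ →
      ∃! x : ℝ, x ∈ Set.Ioo x₁ x₂ ∧ Polynomial.eval x (firstKindPerturbed a b α n τ) = 0 := by
  intro τ hτ
  have hW : ∀ x, (wronskian (firstKindPerturbed a b α n τ₀)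
      (firstKindPerturbed a b α n τ)).eval x ≠ 0 := fun x => by
    rw [wronskian_firstKindPerturbed a b α τ₀ τ fun j hj hjn => mul_pos (hpos j hj hjn).1
      (hpos j hj hjn).2, eval_mul, eval_C]
    exact mul_ne_zero (sub_ne_zero.2 hτ) (eval_sum_sq_firstKind_pos a b α n x).ne'
  refine existsUnique_zero_of_wronskian_ne_zero (fun x => Polynomial.hasDerivAt _ x)
    (fun x => Polynomial.hasDerivAt _ x) hlt (fun x _ => ?_) h₁ h₂ hgap
  simpa [wronskian] using hW x

/-- Interlacing: fix `τ₀` and let `α' < β'` be two roots of `P_{n+1}^{(τ₀)}` with no root of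
`P_{n+1}^{(τ₀)}` in the open interval `(α', β')`.  Then for every `τ ≠ τ₀`, the polynomial
`P_{n+1}^{(τ)}` has exactly one root in `(α', β')`; that is, the spectra of the Jacobi
matrices `J_τ` are pairwise interlaced. -/
theorem firstKindPerturbed_interlacing (n : ℕ) (hn : 1 ≤ n) (a b : ℕ → ℝ)
    (hpos : ∀ k : ℕ, 1 ≤ k → k ≤ n → 0 < a k ∧ 0 < b k) (α : ℕ → ℝ) (τ₀ : ℝ)
    (x₁ x₂ : ℝ) (hlt : x₁ < x₂)
    (h₁ : Polynomial.eval x₁ (firstKindPerturbed a b α n τ₀) = 0)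
    (h₂ : Polynomial.eval x₂ (firstKindPerturbed a b α n τ₀) = 0)
    (hgap : ∀ x ∈ Set.Ioo x₁ x₂, Polynomial.eval x (firstKindPerturbed a b α n τ₀) ≠ 0) :
    ∀ τ : ℝ, τ ≠ τ₀ →
      ∃! x : ℝ, x ∈ Set.Ioo x₁ x₂ ∧ Polynomial.eval x (firstKindPerturbed a b α n τ) = 0 :=
  firstKindPerturbed_interlacing_general n a b hpos α τ₀ x₁ x₂ hlt h₁ h₂ hgap
end
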